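/- Let U ⊆ ℝ^p be an open convex set and ξ : ℝ^p → ℝ ∪ {+∞} a convex function finite and differentiable on U, with Bregman divergence D(y, y') = ξ(y) − ξ(y') − ⟨∇ξ(y'), y − y'⟩. Let γ ≥ 0, let g : ℝ^m → ℝ ∪ {+∞} be proper convex, let h : ℝ^p → ℝ ∪ {+∞} be proper convex with h − γξ convex on U, and let K : ℝ^m → ℝ^p be linear. Define the Lagrangian L(x, y) = g(x) + ⟨Kx, y⟩ − h(y). Let τ' > 0, τ > 0, β > 0, set θ = τ/τ' and σ = βτ. Suppose: x⁰ ∈ ℝ^m, y ∈ U, x¹ is the minimizer of x ↦ g(x) + ⟨Kx, y¹⟩ + ‖x − x⁰‖₂²/(2τ') for some y¹ ∈ U; x̄ = x¹ + θ(x¹ − x⁰); y² ∈ U is the minimizer of w ↦ h(w) − ⟨Kx̄, w⟩ + D(w, y¹)/σ; x² is the minimizer of x ↦ g(x) + ⟨Kx, y²⟩ + ‖x − x¹‖₂²/(2τ); and the linesearch condition (1/2)‖x² − x̄‖₂² + β^{-1} D(y², y¹) + τ ⟨K(x² − x̄), y² − y¹⟩ ≥ 0 holds. Then for every x ∈ dom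 g and every y ∈ U ∩ dom h: (1+θ) L(x¹, y) − θ L(x⁰, y) − L(x, y²) ≤ (1/(2τ))‖x¹ − x‖₂² − (1/(2τ))‖x − x²‖₂² + σ^{-1} D(y, y¹) − (1 + γσ) σ^{-1} D(y, y²). -/

import Mathlib

/-!
Both proximal steps satisfy a variational inequality: if `x` minimizes `ψ + ζ` over a convex
set with `ψ` convex and `ζ` differentiable at `x`, then `ψ x ≤ ψ u + ζ'(u - x)`. For the
Euclidean steps this gives `f x ≤ f u + ⟪x - z, u - x⟫ / τ`, for the Bregman step (with
`h - γξ` convex) the three-point inequality in which the relative strong convexity contributes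
`(γ + σ⁻¹) D(y, y²)`. Combining the first step at `x⁰` and `x²` with weights `θ` and `1`
produces the extrapolation `x̄`, and the cross term `⟪K(x² - x̄), y² - y¹⟫` left over after
adding the dual inequality is exactly what the linesearch condition controls.
-/

open scoped RealInnerProductSpace

theorem ConvexOn.le_add_fderiv_of_isMinOn_add {E : Type*} [NormedAddCommGroup E]
    [NormedSpace ℝ E] {S : Set E} {ψ ζ : E → ℝ} {ζ' : E →L[ℝ] ℝ} {x u : E}
    (hψ : ConvexOn ℝ S ψ) (hζ : HasFDerivAt ζ ζ' x) (hmin : IsMinOn (ψ + ζ) S x)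
    (hx : x ∈ S) (hu : u ∈ S) :
    ψ x ≤ ψ u + ζ' (u - x) := by
  have hchord : ∀ c : ℝ, 1 ≤ c → ψ x - ψ u ≤ c • (ζ (x + c⁻¹ • (u - x)) - ζ x) := by
    intro c hc
    have ht0 : 0 < c⁻¹ := by positivity
    have ht1 : c⁻¹ ≤ 1 := inv_le_one_of_one_le₀ hc
    have hxt : x + c⁻¹ • (u - x) = (1 - c⁻¹) • x + c⁻¹ • u := by module
    have hconv := hψ.2 hx hu (sub_nonneg.2 ht1) ht0.le (sub_add_cancel 1 c⁻¹)
    have hle : ψ x + ζ x ≤ ψ (x + c⁻¹ • (u - x)) + ζ (x + c⁻¹ • (u - x)) :=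
      isMinOn_iff.1 hmin _ (hxt ▸ hψ.1 hx hu (sub_nonneg.2 ht1) ht0.le (sub_add_cancel 1 c⁻¹))
    rw [← hxt, smul_eq_mul, smul_eq_mul] at hconv
    rw [smul_eq_mul]
    calc ψ x - ψ u = c * (c⁻¹ * (ψ x - ψ u)) := by field_simp
      _ ≤ c * (ζ (x + c⁻¹ • (u - x)) - ζ x) := by gcongr; linarith
  linarith [ge_of_tendsto (hζ.lim_real (u - x)) (Filter.eventually_atTop.2 ⟨1, hchord⟩)]

theorem ConvexOn.le_add_inner_of_isMinOn_add_norm_sq {E : Type*} [NormedAddCommGroup E]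
    [InnerProductSpace ℝ E] {S : Set E} {f : E → ℝ} {z x u : E} {τ : ℝ}
    (hf : ConvexOn ℝ S f) (hmin : IsMinOn (fun w => f w + ‖w - z‖ ^ 2 / (2 * τ)) S x)
    (hx : x ∈ S) (hu : u ∈ S) :
    f x ≤ f u + ⟪x - z, u - x⟫ / τ := by
  have hζ := (((hasFDerivAt_id x).sub_const z).norm_sq).mul_const (2 * τ)⁻¹
  simp only [div_eq_mul_inv] at hmin ⊢
  have := hf.le_add_fderiv_of_isMinOn_add hζ hmin hx hu
  convert this using 2
  simp only [ContinuousLinearMap.comp_id, smul_apply, nsmul_eq_mul, coe_innerSL_apply,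
    smul_eq_mul, id_eq, inner_sub_left]
  ring

def bregmanDiv {F : Type*} [NormedAddCommGroup F] [InnerProductSpace ℝ F]
    (ξ : F → ℝ) (gradξ : F → F) (y y' : F) : ℝ :=
  ξ y - ξ y' - ⟪gradξ y', y - y'⟫

theorem ConvexOn.bregmanDiv_three_point_of_isMinOn {F : Type*} [NormedAddCommGroup F]
    [InnerProductSpace ℝ F] [CompleteSpace F] {S : Set F} {h ξ : F → ℝ} {gradξ : F → F} {γ σ : ℝ}
    {a y₁ y₂ y : F} (hrel : ConvexOn ℝ S (fun w => h w - γ * ξ w))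
    (hξ : HasGradientAt ξ (gradξ y₂) y₂)
    (hmin : IsMinOn (fun w => h w - ⟪a, w⟫ + bregmanDiv ξ gradξ w y₁ / σ) S y₂)
    (hy₂ : y₂ ∈ S) (hy : y ∈ S) :
    h y₂ - ⟪a, y₂⟫ + bregmanDiv ξ gradξ y₂ y₁ / σ + (γ + σ⁻¹) * bregmanDiv ξ gradξ y y₂ ≤
      h y - ⟪a, y⟫ + bregmanDiv ξ gradξ y y₁ / σ := by
  -- Up to a constant, the objective is the convex `h - γξ` plus the smooth
  -- `(γ + σ⁻¹) ξ - ⟪a + σ⁻¹ ∇ξ(y₁), ·⟫`.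
  have hζ := ((hasGradientAt_iff_hasFDerivAt.1 hξ).const_mul (γ + σ⁻¹)).sub
    (innerSL ℝ (a + σ⁻¹ • gradξ y₁)).hasFDerivAt
  have hmin' : IsMinOn ((fun w => h w - γ * ξ w) +
      fun w => (γ + σ⁻¹) * ξ w - innerSL ℝ (a + σ⁻¹ • gradξ y₁) w) S y₂ := by
    refine isMinOn_iff.2 fun w hw => ?_
    have := isMinOn_iff.1 hmin w hw
    simp only [Pi.add_apply, bregmanDiv, innerSL_apply_apply, inner_add_left,
      real_inner_smul_left, inner_sub_right] at this ⊢
    linear_combination this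
  have := hrel.le_add_fderiv_of_isMinOn_add hζ hmin' hy₂ hy
  simp only [bregmanDiv, sub_apply, smul_apply,
    InnerProductSpace.toDual_apply_apply, innerSL_apply_apply, smul_eq_mul, inner_add_left,
    real_inner_smul_left, inner_sub_right] at this ⊢
  linear_combination this

theorem ConvexOn.extrapolated_prox_descent {E : Type*} [NormedAddCommGroup E]
    [InnerProductSpace ℝ E] {S : Set E} {f₁ f₂ : E → ℝ} {x₀ x₁ x₂ x : E} {τ' τ θ : ℝ}
    (hf₁ : ConvexOn ℝ S f₁) (hf₂ : ConvexOn ℝ S f₂)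
    (hx₁ : IsMinOn (fun w => f₁ w + ‖w - x₀‖ ^ 2 / (2 * τ')) S x₁)
    (hx₂ : IsMinOn (fun w => f₂ w + ‖w - x₁‖ ^ 2 / (2 * τ)) S x₂)
    (hx₀S : x₀ ∈ S) (hx₁S : x₁ ∈ S) (hx₂S : x₂ ∈ S) (hxS : x ∈ S)
    (hτ' : 0 < τ') (hτ : 0 < τ) (hθ : θ = τ / τ') :
    (1 + θ) * f₁ x₁ - θ * f₁ x₀ - f₁ x₂ + f₂ x₂ - f₂ x +
        ‖x₂ - (x₁ + θ • (x₁ - x₀))‖ ^ 2 / (2 * τ) ≤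
      (‖x₁ - x‖ ^ 2 - ‖x - x₂‖ ^ 2) / (2 * τ) := by
  have hθ0 : 0 ≤ θ := hθ ▸ by positivity
  have h₀ := hf₁.le_add_inner_of_isMinOn_add_norm_sq hx₁ hx₁S hx₀S
  have h₂ := hf₁.le_add_inner_of_isMinOn_add_norm_sq hx₁ hx₁S hx₂S
  have h := hf₂.le_add_inner_of_isMinOn_add_norm_sq hx₂ hx₂S hxS
  have hτ'θ : τ'⁻¹ = θ * τ⁻¹ := by rw [hθ]; field_simp
  rw [div_eq_mul_inv _ τ', hτ'θ] at h₀ h₂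
  rw [show x₀ - x₁ = -(x₁ - x₀) by abel] at h₀
  rw [show x₂ - (x₁ + θ • (x₁ - x₀)) = (x₂ - x₁) - θ • (x₁ - x₀) by abel,
    show x₁ - x = -((x₂ - x₁) + (x - x₂)) by abel]
  generalize x₁ - x₀ = a at h₀ h₂ ⊢
  generalize x₂ - x₁ = b at h₂ h ⊢
  generalize x - x₂ = c at h ⊢
  simp only [norm_sub_sq_real, norm_add_sq_real, norm_neg, norm_smul, inner_neg_right,
    real_inner_smul_right, Real.norm_eq_abs, abs_of_nonneg hθ0, real_inner_self_eq_norm_sq,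
    real_inner_comm a b] at h₀ h₂ h ⊢
  -- `θ / τ = 1 / τ'` turns the two `x₁`-inequalities into one about `x̄ - x₁ = θ a`; what
  -- remains of the norms is the discarded `‖x̄ - x₁‖² / (2τ)`.
  have hslack : 0 ≤ θ ^ 2 * ‖a‖ ^ 2 / (2 * τ) := by positivity
  linear_combination θ * h₀ + h₂ + h + hslack

theorem ConvexOn.add_inner_apply {E F : Type*} [AddCommGroup E] [Module ℝ E]
    [NormedAddCommGroup F] [InnerProductSpace ℝ F] {S : Set E} {g : E → ℝ}
    (hg : ConvexOn ℝ S g) (K : E →ₗ[ℝ] F) (y : F) :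
    ConvexOn ℝ S fun x => g x + ⟪K x, y⟫ :=
  hg.add (((innerₗ F).flip y ∘ₗ K).convexOn hg.1)

theorem hpd_linesearch_descent_inequality_general
    (m p : ℕ)
    (U domξ : Set (EuclideanSpace ℝ (Fin p)))
    (ξ : EuclideanSpace ℝ (Fin p) → ℝ)
    (gξ : EuclideanSpace ℝ (Fin p) → EuclideanSpace ℝ (Fin p))
    (hUconv : Convex ℝ U) (hUsub : U ⊆ domξ)
    (hgrad : ∀ y ∈ U, HasGradientAt ξ (gξ y) y)
    (D : EuclideanSpace ℝ (Fin p) → EuclideanSpace ℝ (Fin p) → ℝ)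
    (hD : ∀ x y, D x y = ξ x - ξ y - ⟪gξ y, x - y⟫)
    (γ : ℝ)
    (domg : Set (EuclideanSpace ℝ (Fin m))) (g : EuclideanSpace ℝ (Fin m) → ℝ)
    (hg : ConvexOn ℝ domg g)
    (domh : Set (EuclideanSpace ℝ (Fin p))) (h : EuclideanSpace ℝ (Fin p) → ℝ)
    (hh : ConvexOn ℝ domh h)
    (hrel : ConvexOn ℝ U (fun y => h y - γ * ξ y))
    (K : EuclideanSpace ℝ (Fin m) →ₗ[ℝ] EuclideanSpace ℝ (Fin p))
    (Lag : EuclideanSpace ℝ (Fin m) → EuclideanSpace ℝ (Fin p) → ℝ)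
    (hLag : ∀ x y, Lag x y = g x + ⟪K x, y⟫ - h y)
    (τ' τ β θ σ : ℝ) (hτ' : 0 < τ') (hτ : 0 < τ) (hβ : 0 < β)
    (hθ : θ = τ / τ') (hσ : σ = β * τ)
    (x0 x1 x2 xbar : EuclideanSpace ℝ (Fin m))
    (y1 y2 : EuclideanSpace ℝ (Fin p))
    (hx0 : x0 ∈ domg)
    -- `x¹` minimizes `x ↦ g x + ⟪K x, y¹⟫ + ‖x − x⁰‖²/(2τ')`
    (hx1 : x1 ∈ domg ∧ ∀ x ∈ domg,
      g x1 + ⟪K x1, y1⟫ + ‖x1 - x0‖ ^ 2 / (2 * τ') ≤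
        g x + ⟪K x, y1⟫ + ‖x - x0‖ ^ 2 / (2 * τ'))
    (hxbar : xbar = x1 + θ • (x1 - x0))
    -- `y²` minimizes `w ↦ h w − ⟪K x̄, w⟫ + D(w, y¹)/σ`
    (hy2 : y2 ∈ U ∧ y2 ∈ domh ∧ ∀ w ∈ domh ∩ domξ,
      h y2 - ⟪K xbar, y2⟫ + D y2 y1 / σ ≤ h w - ⟪K xbar, w⟫ + D w y1 / σ)
    -- `x²` minimizes `x ↦ g x + ⟪K x, y²⟫ + ‖x − x¹‖²/(2τ)`
    (hx2 : x2 ∈ domg ∧ ∀ x ∈ domg,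
      g x2 + ⟪K x2, y2⟫ + ‖x2 - x1‖ ^ 2 / (2 * τ) ≤
        g x + ⟪K x, y2⟫ + ‖x - x1‖ ^ 2 / (2 * τ))
    -- linesearch acceptance condition
    (hls : 0 ≤ (1 / 2) * ‖x2 - xbar‖ ^ 2 + β⁻¹ * D y2 y1 +
      τ * ⟪K (x2 - xbar), y2 - y1⟫) :
    ∀ x ∈ domg, ∀ y ∈ U ∩ domh,
      (1 + θ) * Lag x1 y - θ * Lag x0 y - Lag x y2 ≤
        (1 / (2 * τ)) * ‖x1 - x‖ ^ 2 - (1 / (2 * τ)) * ‖x - x2‖ ^ 2 +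
          σ⁻¹ * D y y1 - (1 + γ * σ) * σ⁻¹ * D y y2 := by
  obtain ⟨hx1S, hx1min⟩ := hx1
  obtain ⟨hy2U, hy2h, hy2min⟩ := hy2
  obtain ⟨hx2S, hx2min⟩ := hx2
  rintro x hx y ⟨hyU, hyh⟩
  obtain rfl : D = bregmanDiv ξ gξ := funext fun a => funext (hD a)
  have hprimal := (hg.add_inner_apply K y1).extrapolated_prox_descent
    (hg.add_inner_apply K y2) (isMinOn_iff.2 hx1min) (isMinOn_iff.2 hx2min)
    hx0 hx1S hx2S hx hτ' hτ hθ
  have hdual := (hrel.subset Set.inter_subset_left (hUconv.inter hh.1)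
    ).bregmanDiv_three_point_of_isMinOn (hgrad y2 hy2U)
    (isMinOn_iff.2 fun w hw => hy2min w ⟨hw.2, hUsub hw.1⟩) ⟨hy2U, hy2h⟩ ⟨hyU, hyh⟩
  have hKbar : ∀ z, ⟪K xbar, z⟫ = (1 + θ) * ⟪K x1, z⟫ - θ * ⟪K x0, z⟫ := fun z => by
    simp only [hxbar, map_add, map_smul, map_sub, inner_add_left, inner_sub_left,
      real_inner_smul_left]
    ring
  have hKls : ⟪K (x2 - xbar), y2 - y1⟫ =
      ⟪K x2, y2⟫ - ⟪K x2, y1⟫ - ⟪K xbar, y2⟫ + ⟪K xbar, y1⟫ := by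
    simp only [map_sub, inner_sub_left, inner_sub_right]
    ring
  subst hσ
  simp only [hLag]
  rw [← hxbar] at hprimal
  linear_combination (norm := skip) hprimal + hdual + τ⁻¹ * hls + hKls - hKbar y + hKbar y1
  refine le_of_eq ?_
  field_simp
  ring

/-- **Per-iteration descent inequality of the HPD method with linesearch.**
With Lagrangian `L(x, y) = g x + ⟪K x, y⟫ − h y`, extrapolation
`x̄ = x¹ + θ(x¹ − x⁰)`, a Bregman proximal dual step producing `y²`, a Euclidean
proximal primal step producing `x²`, and the linesearch acceptance condition,
one has for all `x ∈ dom g` and `y ∈ U ∩ dom h`: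
`(1+θ) L(x¹,y) − θ L(x⁰,y) − L(x,y²) ≤ (1/2τ)‖x¹−x‖² − (1/2τ)‖x−x²‖²
  + σ⁻¹ D(y,y¹) − (1+γσ) σ⁻¹ D(y,y²)`. -/
theorem hpd_linesearch_descent_inequality
    (m p : ℕ)
    (U domξ : Set (EuclideanSpace ℝ (Fin p)))
    (ξ : EuclideanSpace ℝ (Fin p) → ℝ)
    (gξ : EuclideanSpace ℝ (Fin p) → EuclideanSpace ℝ (Fin p))
    (hUopen : IsOpen U) (hUconv : Convex ℝ U) (hUsub : U ⊆ domξ)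
    (hξ : ConvexOn ℝ domξ ξ)
    (hgrad : ∀ y ∈ U, HasGradientAt ξ (gξ y) y)
    (D : EuclideanSpace ℝ (Fin p) → EuclideanSpace ℝ (Fin p) → ℝ)
    (hD : ∀ x y, D x y = ξ x - ξ y - ⟪gξ y, x - y⟫)
    (γ : ℝ) (hγ : 0 ≤ γ)
    (domg : Set (EuclideanSpace ℝ (Fin m))) (g : EuclideanSpace ℝ (Fin m) → ℝ)
    (hgne : domg.Nonempty) (hg : ConvexOn ℝ domg g)
    (domh : Set (EuclideanSpace ℝ (Fin p))) (h : EuclideanSpace ℝ (Fin p) → ℝ)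
    (hhne : domh.Nonempty) (hh : ConvexOn ℝ domh h)
    (hrel : ConvexOn ℝ U (fun y => h y - γ * ξ y))
    (K : EuclideanSpace ℝ (Fin m) →ₗ[ℝ] EuclideanSpace ℝ (Fin p))
    (Lag : EuclideanSpace ℝ (Fin m) → EuclideanSpace ℝ (Fin p) → ℝ)
    (hLag : ∀ x y, Lag x y = g x + ⟪K x, y⟫ - h y)
    (τ' τ β θ σ : ℝ) (hτ' : 0 < τ') (hτ : 0 < τ) (hβ : 0 < β)
    (hθ : θ = τ / τ') (hσ : σ = β * τ)
    (x0 x1 x2 xbar : EuclideanSpace ℝ (Fin m))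
    (y1 y2 : EuclideanSpace ℝ (Fin p))
    (hx0 : x0 ∈ domg) (hy1 : y1 ∈ U)
    -- `x¹` minimizes `x ↦ g x + ⟪K x, y¹⟫ + ‖x − x⁰‖²/(2τ')`
    (hx1 : x1 ∈ domg ∧ ∀ x ∈ domg,
      g x1 + ⟪K x1, y1⟫ + ‖x1 - x0‖ ^ 2 / (2 * τ') ≤
        g x + ⟪K x, y1⟫ + ‖x - x0‖ ^ 2 / (2 * τ'))
    (hxbar : xbar = x1 + θ • (x1 - x0))
    -- `y²` minimizes `w ↦ h w − ⟪K x̄, w⟫ + D(w, y¹)/σ`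
    (hy2 : y2 ∈ U ∧ y2 ∈ domh ∧ ∀ w ∈ domh ∩ domξ,
      h y2 - ⟪K xbar, y2⟫ + D y2 y1 / σ ≤ h w - ⟪K xbar, w⟫ + D w y1 / σ)
    -- `x²` minimizes `x ↦ g x + ⟪K x, y²⟫ + ‖x − x¹‖²/(2τ)`
    (hx2 : x2 ∈ domg ∧ ∀ x ∈ domg,
      g x2 + ⟪K x2, y2⟫ + ‖x2 - x1‖ ^ 2 / (2 * τ) ≤
        g x + ⟪K x, y2⟫ + ‖x - x1‖ ^ 2 / (2 * τ))
    -- linesearch acceptance condition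
    (hls : 0 ≤ (1 / 2) * ‖x2 - xbar‖ ^ 2 + β⁻¹ * D y2 y1 +
      τ * ⟪K (x2 - xbar), y2 - y1⟫) :
    ∀ x ∈ domg, ∀ y ∈ U ∩ domh,
      (1 + θ) * Lag x1 y - θ * Lag x0 y - Lag x y2 ≤
        (1 / (2 * τ)) * ‖x1 - x‖ ^ 2 - (1 / (2 * τ)) * ‖x - x2‖ ^ 2 +
          σ⁻¹ * D y y1 - (1 + γ * σ) * σ⁻¹ * D y y2 :=
  hpd_linesearch_descent_inequality_general m p U domξ ξ gξ hUconv hUsub hgrad D hD γ domg g hg domh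
    h hh hrel K Lag hLag τ' τ β θ σ hτ' hτ hβ hθ hσ x0 x1 x2 xbar y1 y2 hx0 hx1 hxbar hy2 hx2 hls
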